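/- Let M ∈ ℝ^{n×n} be symmetric positive definite and let Ŝ be the τ-list sampling, which picks uniformly at random one of the n sets of τ cyclically consecutive indices {i, i+1, ..., i+τ−1 (mod n)}. Then θ = λ_max(M^{1/2} E[(M_Ŝ)⁻¹] M^{1/2}) ≤ (τ/n)·cond(M), where cond(M) = λ_max(M)/λ_min(M). -/

import Mathlib

open Matrix BigOperators Finset
open scoped MatrixOrder Fin.NatCast

noncomputable section

/-- `A_S`: zero out entries of `A` outside rows/columns indexed by `S`. -/
def zeroPad {n : ℕ} (A : Matrix (Fin n) (Fin n) ℝ) (S : Finset (Fin n)) :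
    Matrix (Fin n) (Fin n) ℝ :=
  Matrix.of fun i j => if i ∈ S ∧ j ∈ S then A i j else 0

/-- `(M_S)⁻¹`: invert the principal submatrix `M_{SS}` in place, zeros elsewhere. -/
def inPlaceInv {n : ℕ} (M : Matrix (Fin n) (Fin n) ℝ) (S : Finset (Fin n)) :
    Matrix (Fin n) (Fin n) ℝ :=
  Matrix.of fun i j =>
    if hi : i ∈ S then
      if hj : j ∈ S then
        (M.submatrix (fun a : {x // x ∈ S} => (a : Fin n))
            (fun a : {x // x ∈ S} => (a : Fin n)))⁻¹ ⟨i, hi⟩ ⟨j, hj⟩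
      else 0
    else 0

/-!
Everything happens in the Loewner order. Compressing `λ_min(M) • 1 ≤ M` to the rows and columns
in `S` gives `λ_min(M) • 1 ≤ M_SS`, hence `(M_S)⁻¹ ≤ λ_min(M)⁻¹ • I_S` with `I_S = zeroPad 1 S`.
Every index lies in exactly `τ` of the `n` cyclic windows, so `E[(M_Ŝ)⁻¹] ≤ τ / (n λ_min) • 1`.
Conjugating by `M^{1/2}` gives `X ≤ τ / (n λ_min) • M ≤ τ λ_max / (n λ_min) • 1`.
-/

open scoped ComplexOrder

lemma Finset.sum_ite_val_eq {ι M : Type*} [DecidableEq ι] [AddCommMonoid M] (S : Finset ι)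
    (f : S → M) (j : ι) :
    ∑ a : S, (if (a : ι) = j then f a else 0) = if h : j ∈ S then f ⟨j, h⟩ else 0 := by
  split_ifs with h
  · rw [Fintype.sum_eq_single ⟨j, h⟩ fun a ha => if_neg fun e => ha (Subtype.ext e), if_pos rfl]
  · exact Finset.sum_eq_zero fun a _ => if_neg fun e : (a : ι) = j => h (e ▸ a.2)

namespace Matrix

section Conjugation

variable {ι κ 𝕜 : Type*} [Fintype ι] [Finite κ] [RCLike 𝕜]

lemma conjTranspose_mul_mul_le_conjTranspose_mul_mul {A B : Matrix ι ι 𝕜} (h : A ≤ B)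
    (C : Matrix ι κ 𝕜) : Cᴴ * A * C ≤ Cᴴ * B * C := by
  rw [le_iff, ← Matrix.sub_mul, ← Matrix.mul_sub]
  exact h.conjTranspose_mul_mul_same C

end Conjugation

section Eigenvalues

variable {ι 𝕜 : Type*} [Fintype ι] [DecidableEq ι] [RCLike 𝕜]

lemma IsHermitian.smul_one_le_iff {A : Matrix ι ι 𝕜} (hA : A.IsHermitian) {r : ℝ} :
    r • (1 : Matrix ι ι 𝕜) ≤ A ↔ ∀ i, r ≤ hA.eigenvalues i := by
  rw [← Algebra.algebraMap_eq_smul_one, algebraMap_le_iff_le_spectrum hA.isSelfAdjoint,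
    hA.spectrum_real_eq_range_eigenvalues, Set.forall_mem_range]

lemma IsHermitian.le_smul_one_iff {A : Matrix ι ι 𝕜} (hA : A.IsHermitian) {r : ℝ} :
    A ≤ r • (1 : Matrix ι ι 𝕜) ↔ ∀ i, hA.eigenvalues i ≤ r := by
  rw [← Algebra.algebraMap_eq_smul_one, le_algebraMap_iff_spectrum_le hA.isSelfAdjoint,
    hA.spectrum_real_eq_range_eigenvalues, Set.forall_mem_range]

lemma IsHermitian.iInf_eigenvalues_smul_one_le {A : Matrix ι ι 𝕜} (hA : A.IsHermitian) :
    (⨅ i, hA.eigenvalues i) • (1 : Matrix ι ι 𝕜) ≤ A :=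
  hA.smul_one_le_iff.2 fun i => ciInf_le (Set.finite_range _).bddBelow i

lemma IsHermitian.le_iSup_eigenvalues_smul_one {A : Matrix ι ι 𝕜} (hA : A.IsHermitian) :
    A ≤ (⨆ i, hA.eigenvalues i) • (1 : Matrix ι ι 𝕜) :=
  hA.le_smul_one_iff.2 fun i => le_ciSup (Set.finite_range _).bddAbove i

lemma IsHermitian.iSup_eigenvalues_le_of_le_smul_one [Nonempty ι] {A : Matrix ι ι 𝕜}
    (hA : A.IsHermitian) {r : ℝ} (h : A ≤ r • (1 : Matrix ι ι 𝕜)) :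
    ⨆ i, hA.eigenvalues i ≤ r :=
  ciSup_le (hA.le_smul_one_iff.1 h)

lemma PosDef.iInf_eigenvalues_pos [Nonempty ι] {A : Matrix ι ι 𝕜} (hA : A.PosDef) :
    0 < ⨅ i, hA.isHermitian.eigenvalues i := by
  obtain ⟨i, hi⟩ := exists_eq_ciInf_of_finite (f := hA.isHermitian.eigenvalues)
  exact hi ▸ hA.eigenvalues_pos i

lemma inv_le_smul_one_of_smul_one_le {A : Matrix ι ι 𝕜} {r : ℝ} (hr : 0 < r)
    (h : r • (1 : Matrix ι ι 𝕜) ≤ A) : A⁻¹ ≤ r⁻¹ • (1 : Matrix ι ι 𝕜) := by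
  have hA : A.PosDef := by simpa using (PosDef.one.smul hr).add_posSemidef h
  rw [← Algebra.algebraMap_eq_smul_one] at h ⊢
  rw [le_algebraMap_iff_spectrum_le hA.inv.isHermitian.isSelfAdjoint]
  intro x hx
  rw [← hA.isUnit.unit_spec, ← coe_units_inv, ← spectrum.map_inv, Set.mem_inv] at hx
  have hx' : r ≤ x⁻¹ := (algebraMap_le_iff_le_spectrum hA.isHermitian.isSelfAdjoint).1 h _ hx
  exact (le_inv_comm₀ hr (inv_pos.1 (hr.trans_le hx'))).1 hx'

end Eigenvalues

section Selection

variable {ι : Type*} [DecidableEq ι] (R : Type*)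

/-- `(selection R S)ᵀ` is the matrix `I_{:S}` of the paper. -/
def selection [Zero R] [One R] (S : Finset ι) : Matrix S ι R :=
  (1 : Matrix ι ι R).submatrix (↑) id

variable [Semiring R] (S : Finset ι)

lemma submatrix_val_eq_selection_mul_mul [Fintype ι] (A : Matrix ι ι R) :
    A.submatrix (↑) (↑) = selection R S * A * (selection R S)ᵀ := by
  ext a b
  simp [selection, mul_apply, one_apply]

lemma selection_mul_transpose [Fintype ι] : selection R S * (selection R S)ᵀ = 1 := by
  have := submatrix_val_eq_selection_mul_mul R S 1
  rwa [Matrix.mul_one, submatrix_one _ Subtype.val_injective, eq_comm] at this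

lemma transpose_selection_mul_mul_selection (B : Matrix S S R) :
    (selection R S)ᵀ * B * selection R S = of fun i j =>
      if hi : i ∈ S then if hj : j ∈ S then B ⟨i, hi⟩ ⟨j, hj⟩ else 0 else 0 := by
  ext i j
  simp only [selection, mul_apply, transpose_apply, submatrix_apply, id_eq, one_apply, of_apply,
    ite_mul, one_mul, zero_mul, mul_ite, mul_one, mul_zero, Finset.sum_ite_val_eq]
  split_ifs <;> rfl

end Selection

end Matrix

section InPlaceInverse

variable {n : ℕ}

lemma inPlaceInv_eq_transpose_selection_mul_mul (M : Matrix (Fin n) (Fin n) ℝ)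
    (S : Finset (Fin n)) :
    inPlaceInv M S = (selection ℝ S)ᵀ * (M.submatrix (↑) (↑) : Matrix S S ℝ)⁻¹ * selection ℝ S := by
  rw [transpose_selection_mul_mul_selection]
  rfl

lemma zeroPad_one_eq_transpose_selection_mul_selection (S : Finset (Fin n)) :
    zeroPad 1 S = (selection ℝ S)ᵀ * selection ℝ S := by
  rw [← Matrix.mul_one (selection ℝ S)ᵀ, transpose_selection_mul_mul_selection]
  ext i j
  by_cases hi : i ∈ S <;> by_cases hj : j ∈ S <;> simp [zeroPad, one_apply, hi, hj]

lemma inPlaceInv_le_smul_zeroPad_one {M : Matrix (Fin n) (Fin n) ℝ} {r : ℝ} (hr : 0 < r)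
    (h : r • 1 ≤ M) (S : Finset (Fin n)) : inPlaceInv M S ≤ r⁻¹ • zeroPad 1 S := by
  have hsub : r • (1 : Matrix S S ℝ) ≤ M.submatrix (↑) (↑) := by
    simpa [conjTranspose_eq_transpose_of_trivial, selection_mul_transpose,
      ← submatrix_val_eq_selection_mul_mul] using
      conjTranspose_mul_mul_le_conjTranspose_mul_mul h (selection ℝ S)ᵀ
  rw [inPlaceInv_eq_transpose_selection_mul_mul, zeroPad_one_eq_transpose_selection_mul_selection]
  simpa [conjTranspose_eq_transpose_of_trivial] using
    conjTranspose_mul_mul_le_conjTranspose_mul_mul (inv_le_smul_one_of_smul_one_le hr hsub)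
      (selection ℝ S)

end InPlaceInverse

section CyclicWindow

variable {n : ℕ} [NeZero n]

def cyclicWindow (τ : ℕ) (i : Fin n) : Finset (Fin n) :=
  image (fun k : Fin τ => i + ((k : ℕ) : Fin n)) univ

lemma card_filter_mem_cyclicWindow {τ : ℕ} (hτn : τ ≤ n) (j : Fin n) :
    #{i | j ∈ cyclicWindow τ i} = τ := by
  have hfilter : ({i | j ∈ cyclicWindow τ i} : Finset (Fin n)) =
      image (fun k : Fin τ => j - ((k : ℕ) : Fin n)) univ := by
    ext i
    simp only [cyclicWindow, mem_filter, mem_univ, true_and, mem_image, sub_eq_iff_eq_add]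
    exact exists_congr fun k => eq_comm
  rw [hfilter, card_image_of_injective _ fun k l hkl => ?_, card_univ, Fintype.card_fin]
  have hval := congrArg Fin.val (sub_right_injective hkl)
  rwa [Fin.val_cast_of_lt (k.2.trans_le hτn), Fin.val_cast_of_lt (l.2.trans_le hτn),
    ← Fin.ext_iff] at hval

lemma sum_zeroPad_one_cyclicWindow {τ : ℕ} (hτn : τ ≤ n) :
    ∑ i, zeroPad 1 (cyclicWindow τ i) = (τ : ℝ) • (1 : Matrix (Fin n) (Fin n) ℝ) := by
  ext j l
  by_cases hjl : j = l
  · subst hjl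
    simp [zeroPad, Matrix.sum_apply, Finset.sum_boole, card_filter_mem_cyclicWindow hτn]
  · simp [zeroPad, Matrix.sum_apply, one_apply, hjl]

end CyclicWindow

theorem stmt9_general {n τ : ℕ} [NeZero n] (hτn : τ ≤ n)
    (M : Matrix (Fin n) (Fin n) ℝ) (hM : M.PosDef) (hMH : M.IsHermitian)
    (X : Matrix (Fin n) (Fin n) ℝ)
    (hXdef : X = CFC.sqrt M *
      ((n : ℝ)⁻¹ • ∑ i : Fin n, inPlaceInv M
        (Finset.image (fun k : Fin τ => i + ((k : ℕ) : Fin n)) Finset.univ)) *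
      CFC.sqrt M)
    (hX : X.IsHermitian) :
    (⨆ i, hX.eigenvalues i) ≤
      ((τ : ℝ) / n) * ((⨆ i, hMH.eigenvalues i) / (⨅ i, hMH.eigenvalues i)) := by
  set lmin := ⨅ i, hMH.eigenvalues i
  set lmax := ⨆ i, hMH.eigenvalues i
  have hlmin : 0 < lmin := hM.iInf_eigenvalues_pos
  have hE : (n : ℝ)⁻¹ • ∑ i : Fin n, inPlaceInv M (cyclicWindow τ i) ≤
      ((τ : ℝ) / n / lmin) • 1 := calc
    _ ≤ (n : ℝ)⁻¹ • ∑ i, lmin⁻¹ • zeroPad 1 (cyclicWindow τ i) := by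
      gcongr with i
      exact inPlaceInv_le_smul_zeroPad_one hlmin hMH.iInf_eigenvalues_smul_one_le _
    _ = _ := by
      rw [← smul_sum, sum_zeroPad_one_cyclicWindow hτn, smul_smul, smul_smul]
      congr 1
      ring
  have hXM : X ≤ ((τ : ℝ) / n / lmin) • M := calc
    X ≤ CFC.sqrt M * (((τ : ℝ) / n / lmin) • 1) * CFC.sqrt M :=
      hXdef ▸ conjugate_le_conjugate_of_nonneg hE (CFC.sqrt_nonneg M)
    _ = ((τ : ℝ) / n / lmin) • M := by
      rw [Matrix.mul_smul, Matrix.smul_mul, Matrix.mul_one,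
        CFC.sqrt_mul_sqrt_self M hM.posSemidef.nonneg]
  refine hX.iSup_eigenvalues_le_of_le_smul_one (hXM.trans ?_)
  calc ((τ : ℝ) / n / lmin) • M ≤ ((τ : ℝ) / n / lmin) • lmax • 1 := by
        gcongr
        exact hMH.le_iSup_eigenvalues_smul_one
    _ = _ := by
      rw [smul_smul]
      congr 1
      ring

/-- For `M ≻ 0` and the `τ`-list sampling (uniform over the `n` cyclic windows
of length `τ`), `θ = λmax(M^{1/2} E[(M_Ŝ)⁻¹] M^{1/2}) ≤ (τ/n)·cond(M)`. -/
theorem stmt9 {n τ : ℕ} [NeZero n] (hτ : 0 < τ) (hτn : τ ≤ n)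
    (M : Matrix (Fin n) (Fin n) ℝ) (hM : M.PosDef) (hMH : M.IsHermitian)
    (X : Matrix (Fin n) (Fin n) ℝ)
    (hXdef : X = CFC.sqrt M *
      ((n : ℝ)⁻¹ • ∑ i : Fin n, inPlaceInv M
        (Finset.image (fun k : Fin τ => i + ((k : ℕ) : Fin n)) Finset.univ)) *
      CFC.sqrt M)
    (hX : X.IsHermitian) :
    (⨆ i, hX.eigenvalues i) ≤
      ((τ : ℝ) / n) * ((⨆ i, hMH.eigenvalues i) / (⨅ i, hMH.eigenvalues i)) :=
  stmt9_general hτn M hM hMH X hXdef hX
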